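/- Let n ≥ 1, let L₂, …, Lₙ be Kripke complete monomodal logics, and let L = T × L₂ × … × Lₙ. Fix an n-modal formula φ whose variables are among p₁, …, p_m and let A and σ be the formula and translation defined from φ. If φ ∉ L, then A → σ(φ) ∉ L. (Direction (⇐) of Lemma 3.1, in contrapositive form) -/

import Mathlib

namespace ModalProducts

/-- `N`-modal formulas over propositional variables indexed by `ℕ`
(the variable `pₖ` is `var k`; the extra variable `p` is `var 0`). -/
inductive MF (N : ℕ) : Type
  | var : ℕ → MF N
  | bot : MF N
  | and : MF N → MF N → MF N
  | or  : MF N → MF N → MF N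
  | imp : MF N → MF N → MF N
  | box : Fin N → MF N → MF N
deriving DecidableEq

namespace MF

variable {N : ℕ}

/-- negation: `¬ψ = ψ → ⊥`. -/
def neg (φ : MF N) : MF N := imp φ bot

/-- diamond: `◇ᵢψ = ¬□ᵢ¬ψ`. -/
def dia (i : Fin N) (φ : MF N) : MF N := neg (box i (neg φ))

/-- modal depth. -/
def md : MF N → ℕ
  | var _ => 0
  | bot => 0
  | and φ ψ => max (md φ) (md ψ)
  | or φ ψ => max (md φ) (md ψ)
  | imp φ ψ => max (md φ) (md ψ)
  | box _ φ => md φ + 1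

/-- length (number of symbols; the variable `pₖ` counts as `k+1` symbols,
accounting for the subscript). -/
def len : MF N → ℕ
  | var q => q + 1
  | bot => 1
  | and φ ψ => len φ + len ψ + 1
  | or φ ψ => len φ + len ψ + 1
  | imp φ ψ => len φ + len ψ + 1
  | box _ φ => len φ + 1

/-- the set of propositional variables occurring in a formula. -/
def vars : MF N → Set ℕ
  | var q => {q}
  | bot => ∅
  | and φ ψ => vars φ ∪ vars ψ
  | or φ ψ => vars φ ∪ vars ψ
  | imp φ ψ => vars φ ∪ vars ψ
  | box _ φ => vars φ

/-- the largest index of a variable occurring in a formula (0 if none). -/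
def maxVar : MF N → ℕ
  | var q => q
  | bot => 0
  | and φ ψ => max (maxVar φ) (maxVar ψ)
  | or φ ψ => max (maxVar φ) (maxVar ψ)
  | imp φ ψ => max (maxVar φ) (maxVar ψ)
  | box _ φ => maxVar φ

/-- the list of subformulas of a formula. -/
def subfs : MF N → List (MF N)
  | var q => [var q]
  | bot => [bot]
  | and φ ψ => and φ ψ :: (subfs φ ++ subfs ψ)
  | or φ ψ => or φ ψ :: (subfs φ ++ subfs ψ)
  | imp φ ψ => imp φ ψ :: (subfs φ ++ subfs ψ)
  | box i φ => box i φ :: subfs φ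

/-- uniform substitution of formulas for variables. -/
def subst (s : ℕ → MF N) : MF N → MF N
  | var q => s q
  | bot => bot
  | and φ ψ => and (subst s φ) (subst s ψ)
  | or φ ψ => or (subst s φ) (subst s ψ)
  | imp φ ψ => imp (subst s φ) (subst s ψ)
  | box i φ => box i (subst s φ)

end MF

/-- `θ` is a subformula of `φ`. -/
def Subformula {N : ℕ} (θ φ : MF N) : Prop := θ ∈ φ.subfs

/-- A Kripke `N`-frame: a nonempty set of points with `N` accessibility relations. -/
structure Frame (N : ℕ) where
  W : Type
  nonempty : Nonempty W
  R : Fin N → W → W → Prop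

/-- Truth of a formula at a point of a frame under a valuation. -/
def Sat {N : ℕ} (F : Frame N) (v : ℕ → Set F.W) : F.W → MF N → Prop
  | x, .var q => x ∈ v q
  | _, .bot => False
  | x, .and φ ψ => Sat F v x φ ∧ Sat F v x ψ
  | x, .or φ ψ => Sat F v x φ ∨ Sat F v x ψ
  | x, .imp φ ψ => Sat F v x φ → Sat F v x ψ
  | x, .box i φ => ∀ y, F.R i x y → Sat F v y φ

/-- Validity of a formula in a frame: truth at every point under every valuation. -/
def Valid {N : ℕ} (F : Frame N) (φ : MF N) : Prop := ∀ (v : ℕ → Set F.W) (x : F.W), Sat F v x φ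

/-- A set of formulas is valid in a frame if all of its members are. -/
def ValidSet {N : ℕ} (F : Frame N) (L : Set (MF N)) : Prop := ∀ φ ∈ L, Valid F φ

/-- The logic of a class of frames. -/
def Logic {N : ℕ} (C : Set (Frame N)) : Set (MF N) := {φ | ∀ F ∈ C, Valid F φ}

/-- A logic is Kripke complete if it is the logic of some nonempty class of frames. -/
def KripkeComplete {N : ℕ} (L : Set (MF N)) : Prop :=
  ∃ C : Set (Frame N), C.Nonempty ∧ L = Logic C

/-- The product of `N` 1-frames. -/
def prodFrame {N : ℕ} (Fs : Fin N → Frame 1) : Frame N where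
  W := ∀ i, (Fs i).W
  nonempty := ⟨fun i => (Fs i).nonempty.some⟩
  R := fun i x y => (Fs i).R 0 (x i) (y i) ∧ ∀ k, k ≠ i → x k = y k

/-- The product of `N` Kripke complete monomodal logics: the logic of the class of
products of frames of the factors. -/
def productLogic {N : ℕ} (Ls : Fin N → Set (MF 1)) : Set (MF N) :=
  Logic {F | ∃ Fs : Fin N → Frame 1, (∀ i, ValidSet (Fs i) (Ls i)) ∧ F = prodFrame Fs}

/-- A 1-frame is reflexive. -/
def ReflexiveFrame (F : Frame 1) : Prop := ∀ x, F.R 0 x x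

/-- The logic `T` of all reflexive 1-frames. -/
def logicT : Set (MF 1) := Logic {F | ReflexiveFrame F}

/-- The logic `K` of all 1-frames. -/
def logicK : Set (MF 1) := Logic Set.univ

/-- The logic `S5` of all 1-frames whose relation is an equivalence. -/
def logicS5 : Set (MF 1) := Logic {F | Equivalence (F.R 0)}

section Translation

variable {n : ℕ}

/-- the variable `p`. -/
def pv : MF (n+1) := .var 0

/-- `◆₁ψ = ◇₁(¬p ∧ ◇₁(p ∧ ψ))`. -/
def blackDia (ψ : MF (n+1)) : MF (n+1) :=
  MF.dia 0 (.and (MF.neg pv) (MF.dia 0 (.and pv ψ)))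

/-- `α_k = ◆₁ᵏ □₁ p`. -/
def alphaF (k : ℕ) : MF (n+1) := blackDia^[k] (.box 0 pv)

/-- `β_k = ¬p ∧ ◇₁(p ∧ α_k)`. -/
def betaF (k : ℕ) : MF (n+1) := .and (MF.neg pv) (MF.dia 0 (.and pv (alphaF k)))

/-- `B = β_{m+1}`. -/
def Bf (m : ℕ) : MF (n+1) := betaF (m+1)

/-- The translation `σ`: `σ(p_k) = β_k`, `σ(⊥) = ⊥`, `σ` commutes with `∧, ∨, →`,
and `σ(□ᵢψ) = □ᵢ(B → σ(ψ))`. -/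
def sigmaT (m : ℕ) : MF (n+1) → MF (n+1)
  | .var k => betaF k
  | .bot => .bot
  | .and φ ψ => .and (sigmaT m φ) (sigmaT m ψ)
  | .or φ ψ => .or (sigmaT m φ) (sigmaT m ψ)
  | .imp φ ψ => .imp (sigmaT m φ) (sigmaT m ψ)
  | .box i φ => .box i (.imp (Bf m) (sigmaT m φ))

/-- conjunction of a head formula with a list of formulas. -/
def bigAnd (ψ : MF (n+1)) (l : List (MF (n+1))) : MF (n+1) := l.foldl .and ψ

/-- `□^{≤k}`: `□^{≤0}ψ = ψ`, `□^{≤k+1}ψ = □^{≤k}ψ ∧ □₁□^{≤k}ψ ∧ … ∧ □ₙ□^{≤k}ψ`. -/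
def boxLe : ℕ → MF (n+1) → MF (n+1)
  | 0, ψ => ψ
  | k+1, ψ => bigAnd (boxLe k ψ) (List.ofFn fun i : Fin (n+1) => .box i (boxLe k ψ))

/-- `□₋₁^{≤k}`: like `□^{≤k}` but using only `□₂, …, □ₙ`. -/
def boxLeTail : ℕ → MF (n+1) → MF (n+1)
  | 0, ψ => ψ
  | k+1, ψ => bigAnd (boxLeTail k ψ) (List.ofFn fun i : Fin n => .box i.succ (boxLeTail k ψ))

/-- `◇₋₁^{≤k}ψ = ¬□₋₁^{≤k}¬ψ`. -/
def diaLeTail (k : ℕ) (ψ : MF (n+1)) : MF (n+1) := MF.neg (boxLeTail k (MF.neg ψ))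

/-- `A = B ∧ □^{≤md φ}(B → □₋₁^{≤md φ}B) ∧ □^{≤md φ}(◇₋₁^{≤md φ}B → B)`. -/
def Af (m : ℕ) (φ : MF (n+1)) : MF (n+1) :=
  .and (Bf m)
    (.and (boxLe φ.md (.imp (Bf m) (boxLeTail φ.md (Bf m))))
          (boxLe φ.md (.imp (diaLeTail φ.md (Bf m)) (Bf m))))

end Translation

end ModalProducts

/-!
Take a countermodel to `φ` on a product `F₀ × F₁ × ⋯ × Fₙ` with `F₀` reflexive, and replace `F₀`
by the reflexive frame that attaches to every point `x` and every `k` a spike: an `R₀`-chain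
`x → (x, k, 0) → (x, k, 1) → ⋯ → (x, k, 2k)`. Above a column `(x, t)` the spike `k` is enabled when
`k = m + 1`, or `k ≤ m` and `p_k` holds at `(x, t)`; the variable `p` marks the even points of the
enabled spikes. Along an enabled spike `αₛ` holds at `(x, k, j)` iff `2k - j ∈ {2s - 1, 2s}`, so
`β_k` holds at an original point exactly when its `k`-th spike is enabled. Hence `B` holds exactly
at the original points, a set closed under `R₁, …, Rₙ`, which makes `A` true there, and
`σ(φ)` at an original point says what `φ` says in the countermodel.
-/

namespace ModalProducts

open MF

section Semantics

variable {N : ℕ} {F : Frame N} {v : ℕ → Set F.W} {x : F.W}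

lemma sat_neg {ψ : MF N} : Sat F v x (neg ψ) ↔ ¬ Sat F v x ψ := Iff.rfl

lemma sat_and {ψ χ : MF N} : Sat F v x (.and ψ χ) ↔ Sat F v x ψ ∧ Sat F v x χ := Iff.rfl

lemma sat_var {q : ℕ} : Sat F v x (.var q) ↔ x ∈ v q := Iff.rfl

lemma sat_dia {i : Fin N} {ψ : MF N} : Sat F v x (dia i ψ) ↔ ∃ y, F.R i x y ∧ Sat F v y ψ := by
  simp [dia, sat_neg, Sat]

end Semantics

section Translation

variable {n : ℕ} {F : Frame (n+1)} {v : ℕ → Set F.W}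

lemma sat_bigAnd {x : F.W} {ψ : MF (n+1)} {l : List (MF (n+1))} :
    Sat F v x (bigAnd ψ l) ↔ Sat F v x ψ ∧ ∀ χ ∈ l, Sat F v x χ := by
  induction l generalizing ψ with
  | nil => simp [bigAnd]
  | cons χ l ih =>
    simp only [bigAnd, List.foldl_cons] at ih ⊢
    simp [ih, Sat, and_assoc]

lemma sat_boxLe_of_forall {ψ : MF (n+1)} (h : ∀ x, Sat F v x ψ) (d : ℕ) (x : F.W) :
    Sat F v x (boxLe d ψ) := by
  induction d generalizing x with
  | zero => exact h x
  | succ d ih => simp [boxLe, sat_bigAnd, Sat, ih]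

lemma sat_boxLeTail_of_sat {ψ : MF (n+1)}
    (h : ∀ (i : Fin n) x y, F.R i.succ x y → Sat F v x ψ → Sat F v y ψ) (d : ℕ) {x : F.W}
    (hx : Sat F v x ψ) : Sat F v x (boxLeTail d ψ) := by
  induction d generalizing x with
  | zero => exact hx
  | succ d ih =>
    simp only [boxLeTail, sat_bigAnd, List.mem_ofFn, forall_exists_index, forall_apply_eq_imp_iff]
    exact ⟨ih hx, fun i y hy => ih (h i x y hy hx)⟩

lemma sat_Af_of_sat_Bf {m : ℕ} (φ : MF (n+1))
    (hB : ∀ (i : Fin n) x y, F.R i.succ x y → (Sat F v x (Bf m) ↔ Sat F v y (Bf m)))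
    {x : F.W} (hx : Sat F v x (Bf m)) : Sat F v x (Af m φ) := by
  refine ⟨hx, sat_boxLe_of_forall (fun y hy => ?_) _ _, sat_boxLe_of_forall (fun y hy => ?_) _ _⟩
  · exact sat_boxLeTail_of_sat (fun i x y hxy => (hB i x y hxy).1) _ hy
  · by_contra hyB
    exact hy (sat_boxLeTail_of_sat (ψ := neg (Bf m)) (fun i x y hxy => mt (hB i x y hxy).2) _ hyB)

/-- `σ` relativises to `B`: if the `B`-points of `F` form a copy of `G` in which `β_k` plays the
role of `p_k`, then `σ(φ)` holds at the copy of `y` iff `φ` holds at `y`. -/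
lemma sat_sigmaT_iff {G : Frame (n+1)} {u : ℕ → Set G.W} {m : ℕ} (e : G.W → F.W)
    (hR : ∀ i y z, F.R i (e y) (e z) ↔ G.R i y z)
    (hB : ∀ x, Sat F v x (Bf m) ↔ ∃ y, x = e y)
    (hβ : ∀ k ≤ m, ∀ y, Sat F v (e y) (betaF k) ↔ y ∈ u k)
    {φ : MF (n+1)} (hφ : ∀ q ∈ φ.vars, q ≤ m) (y : G.W) :
    Sat F v (e y) (sigmaT m φ) ↔ Sat G u y φ := by
  induction φ generalizing y with
  | var q => exact hβ q (hφ q rfl) y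
  | bot => exact Iff.rfl
  | and a b iha ihb =>
    exact and_congr (iha (fun q hq => hφ q (.inl hq)) y) (ihb (fun q hq => hφ q (.inr hq)) y)
  | or a b iha ihb =>
    exact or_congr (iha (fun q hq => hφ q (.inl hq)) y) (ihb (fun q hq => hφ q (.inr hq)) y)
  | imp a b iha ihb =>
    exact imp_congr (iha (fun q hq => hφ q (.inl hq)) y) (ihb (fun q hq => hφ q (.inr hq)) y)
  | box i a ih =>
    constructor
    · intro h z hyz
      exact (ih hφ z).1 (h (e z) ((hR i y z).2 hyz) ((hB _).2 ⟨z, rfl⟩))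
    · rintro h x hyx hx
      obtain ⟨z, rfl⟩ := (hB x).1 hx
      exact (ih hφ z).2 (h z ((hR i y z).1 hyx))

end Translation

section Chain

variable {n : ℕ} {F : Frame (n+1)} {v : ℕ → Set F.W} {c : ℕ → F.W} {L : ℕ}

lemma alphaF_succ (s : ℕ) : (alphaF (s+1) : MF (n+1)) = blackDia (alphaF s) :=
  Function.iterate_succ_apply' _ _ _

lemma sat_box_zero_of_chain (hc : ∀ j x, F.R 0 (c j) x ↔ x = c j ∨ (j < L ∧ x = c (j+1)))
    (j : ℕ) (ψ : MF (n+1)) :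
    Sat F v (c j) (.box 0 ψ) ↔ Sat F v (c j) ψ ∧ (j < L → Sat F v (c (j+1)) ψ) := by
  simp only [Sat, hc]
  aesop

lemma sat_dia_zero_of_chain (hc : ∀ j x, F.R 0 (c j) x ↔ x = c j ∨ (j < L ∧ x = c (j+1)))
    (j : ℕ) (ψ : MF (n+1)) :
    Sat F v (c j) (dia 0 ψ) ↔ Sat F v (c j) ψ ∨ (j < L ∧ Sat F v (c (j+1)) ψ) := by
  simp only [sat_dia, hc]
  aesop

lemma sat_alphaF_of_chain (hc : ∀ j x, F.R 0 (c j) x ↔ x = c j ∨ (j < L ∧ x = c (j+1)))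
    (hp : ∀ j, c j ∈ v 0 ↔ Even j ∧ j ≤ L) (hL : Even L) (s j : ℕ) :
    Sat F v (c j) (alphaF s) ↔ j ≤ L ∧ L ≤ j + 2 * s ∧ j + 2 * s ≤ L + 1 := by
  have hL := Nat.even_iff.1 hL
  induction s generalizing j with
  | zero =>
    simp only [alphaF, Function.iterate_zero, id, sat_box_zero_of_chain hc, pv, Sat, hp,
      Nat.even_iff]
    omega
  | succ s ih =>
    simp only [alphaF_succ, blackDia, sat_dia_zero_of_chain hc, Sat, sat_neg, pv, hp, ih,
      Nat.even_iff]
    omega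

end Chain

section Products

variable {n : ℕ} {Gs : Fin (n+1) → Frame 1}

lemma prodFrame_R_zero_iff {x y : (prodFrame Gs).W} :
    (prodFrame Gs).R 0 x y ↔ (Gs 0).R 0 (x 0) (y 0) ∧ Fin.tail x = Fin.tail y := by
  simp [prodFrame, funext_iff, Fin.forall_fin_succ, Fin.tail, Fin.succ_ne_zero]

lemma prodFrame_R_succ_iff {i : Fin n} {x y : (prodFrame Gs).W} :
    (prodFrame Gs).R i.succ x y ↔
      x 0 = y 0 ∧ (prodFrame (Fin.tail Gs)).R i (Fin.tail x) (Fin.tail y) := by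
  simp [prodFrame, Fin.forall_fin_succ, Fin.tail, (Fin.succ_ne_zero i).symm, and_left_comm]

end Products

abbrev Spiked (X : Type) : Type := X ⊕ X × ℕ × ℕ

/-- `inr (x, k, j)` is the `j`-th point of the `k`-th spike above `x`; points with `j > 2k` are
unreachable. -/
def spikeRel {X : Type} (R : X → X → Prop) : Spiked X → Spiked X → Prop
  | .inl x, .inl y => R x y
  | .inl x, .inr (y, _, j) => y = x ∧ j = 0
  | .inr (x, k, j), .inr (y, l, i) => y = x ∧ l = k ∧ (i = j ∨ (i = j + 1 ∧ j < 2 * k))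
  | .inr _, .inl _ => False

def spikeFrame (F : Frame 1) : Frame 1 where
  W := Spiked F.W
  nonempty := ⟨.inl F.nonempty.some⟩
  R _ := spikeRel (F.R 0)

lemma ReflexiveFrame.spikeFrame {F : Frame 1} (h : ReflexiveFrame F) :
    ReflexiveFrame (spikeFrame F)
  | .inl x => h x
  | .inr _ => ⟨rfl, rfl, .inl rfl⟩

section SpikeProduct

variable {n : ℕ} (Fs : Fin (n+1) → Frame 1)

def spikeFactors : Fin (n+1) → Frame 1 := Fin.cons (spikeFrame (Fs 0)) (Fin.tail Fs)

abbrev SpikeW := (prodFrame (spikeFactors Fs)).W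

variable {Fs}

def spikePt (a : Spiked (Fs 0).W) (t : ∀ i : Fin n, (Fs i.succ).W) : SpikeW Fs :=
  Fin.cons (α := fun i => (spikeFactors Fs i).W) a t

lemma spikePt_head_tail (y : SpikeW Fs) : spikePt (y 0) (Fin.tail y) = y :=
  Fin.cons_self_tail y

lemma spikePt_inj {a b t s} : spikePt (Fs := Fs) a t = spikePt b s ↔ a = b ∧ t = s :=
  Fin.cons_inj

lemma R_zero_spikePt_iff {a t} {y : SpikeW Fs} :
    (prodFrame (spikeFactors Fs)).R 0 (spikePt a t) y ↔
      ∃ b, spikeRel ((Fs 0).R 0) a b ∧ y = spikePt b t := by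
  obtain ⟨b, s, rfl⟩ : ∃ b s, y = spikePt b s := ⟨_, _, (spikePt_head_tail y).symm⟩
  rw [prodFrame_R_zero_iff]
  change spikeRel ((Fs 0).R 0) a b ∧ t = s ↔ _
  simp only [spikePt_inj]
  aesop

lemma R_zero_spikePt_inr_iff {x : (Fs 0).W} {k j : ℕ} {t} {y : SpikeW Fs} :
    (prodFrame (spikeFactors Fs)).R 0 (spikePt (.inr (x, k, j)) t) y ↔
      y = spikePt (.inr (x, k, j)) t ∨ (j < 2 * k ∧ y = spikePt (.inr (x, k, j + 1)) t) := by
  rw [R_zero_spikePt_iff]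
  constructor
  · rintro ⟨_ | ⟨x', k', j'⟩, hb, rfl⟩
    · exact hb.elim
    · obtain ⟨rfl, rfl, rfl | ⟨rfl, hj⟩⟩ := hb
      exacts [.inl rfl, .inr ⟨hj, rfl⟩]
  · rintro (rfl | ⟨hj, rfl⟩)
    exacts [⟨.inr (x, k, j), ⟨rfl, rfl, .inl rfl⟩, rfl⟩,
      ⟨.inr (x, k, j + 1), ⟨rfl, rfl, .inr ⟨rfl, hj⟩⟩, rfl⟩]

variable (m : ℕ) (v : ℕ → Set (∀ i, (Fs i).W))

def Enabled (w : ∀ i, (Fs i).W) (k : ℕ) : Prop := k = m + 1 ∨ (k ≤ m ∧ w ∈ v k)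

/-- Only `p = var 0` occurs in `σ(φ)`, so every variable gets the value of `p`. -/
def spikeVal : ℕ → Set (SpikeW Fs) := fun _ =>
  {y | ∃ x k j t, y = spikePt (.inr (x, k, j)) t ∧ Enabled m v (Fin.cons x t) k ∧
    Even j ∧ j ≤ 2 * k}

variable {m v}

lemma spikePt_inr_mem_spikeVal_iff {x : (Fs 0).W} {k j : ℕ} {t q} :
    spikePt (.inr (x, k, j)) t ∈ spikeVal m v q ↔
      Enabled m v (Fin.cons x t) k ∧ Even j ∧ j ≤ 2 * k := by
  simp [spikeVal, spikePt_inj]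

lemma spikePt_inl_notMem_spikeVal {x : (Fs 0).W} {t q} :
    spikePt (.inl x) t ∉ spikeVal m v q := by
  simp [spikeVal, spikePt_inj]

lemma sat_alphaF_spikePt_inr {x : (Fs 0).W} {k : ℕ} {t} (he : Enabled m v (Fin.cons x t) k)
    (s j : ℕ) :
    Sat (prodFrame (spikeFactors Fs)) (spikeVal m v) (spikePt (.inr (x, k, j)) t) (alphaF s) ↔
      j ≤ 2 * k ∧ 2 * k ≤ j + 2 * s ∧ j + 2 * s ≤ 2 * k + 1 :=
  sat_alphaF_of_chain (F := prodFrame (spikeFactors Fs)) (c := fun j => spikePt (.inr (x, k, j)) t)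
    (fun _ _ => R_zero_spikePt_inr_iff)
    (fun _ => by simp only [spikePt_inr_mem_spikeVal_iff, he, true_and]) (even_two_mul k) s j

lemma sat_betaF_spikePt_inl_iff {x : (Fs 0).W} {t} {s : ℕ} :
    Sat (prodFrame (spikeFactors Fs)) (spikeVal m v) (spikePt (.inl x) t) (betaF s) ↔
      Enabled m v (Fin.cons x t) s := by
  simp only [betaF, sat_and, sat_neg, sat_dia, pv, sat_var, R_zero_spikePt_iff]
  constructor
  · rintro ⟨-, y, ⟨_ | ⟨x', k, j⟩, hb, rfl⟩, hp, hα⟩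
    · exact absurd hp spikePt_inl_notMem_spikeVal
    · obtain ⟨rfl, rfl⟩ := hb
      have he := (spikePt_inr_mem_spikeVal_iff.1 hp).1
      obtain rfl : k = s := by rw [sat_alphaF_spikePt_inr he] at hα; omega
      exact he
  · intro he
    exact ⟨spikePt_inl_notMem_spikeVal, _, ⟨.inr (x, s, 0), ⟨rfl, rfl⟩, rfl⟩,
      spikePt_inr_mem_spikeVal_iff.2 ⟨he, Even.zero, Nat.zero_le _⟩,
      (sat_alphaF_spikePt_inr he s 0).2 (by omega)⟩

/-- Enabled spikes have length at most `2(m + 1)`, so `p ∧ αₘ₊₁` only holds at their feet. -/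
lemma eq_zero_of_sat_alphaF_spikePt_inr {x : (Fs 0).W} {k j : ℕ} {t}
    (hp : spikePt (.inr (x, k, j)) t ∈ spikeVal m v 0)
    (hα : Sat (prodFrame (spikeFactors Fs)) (spikeVal m v) (spikePt (.inr (x, k, j)) t)
      (alphaF (m + 1))) :
    j = 0 := by
  obtain ⟨he, hj, -⟩ := spikePt_inr_mem_spikeVal_iff.1 hp
  have hk : k ≤ m + 1 := by rcases he with rfl | ⟨hk, -⟩ <;> omega
  rw [sat_alphaF_spikePt_inr he] at hα
  rw [Nat.even_iff] at hj
  omega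

lemma not_sat_Bf_spikePt_inr {x : (Fs 0).W} {k j : ℕ} {t} :
    ¬ Sat (prodFrame (spikeFactors Fs)) (spikeVal m v) (spikePt (.inr (x, k, j)) t) (Bf m) := by
  simp only [Bf, betaF, sat_and, sat_neg, sat_dia, pv, sat_var, R_zero_spikePt_inr_iff]
  rintro ⟨hp, y, (rfl | ⟨-, rfl⟩), hp', hα⟩
  · exact hp hp'
  · exact j.succ_ne_zero (eq_zero_of_sat_alphaF_spikePt_inr hp' hα)

lemma sat_Bf_iff (y : SpikeW Fs) :
    Sat (prodFrame (spikeFactors Fs)) (spikeVal m v) y (Bf m) ↔ ∃ x, y 0 = .inl x := by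
  rw [← spikePt_head_tail y]
  rcases y 0 with x | ⟨x, k, j⟩
  · exact iff_of_true (sat_betaF_spikePt_inl_iff.2 (.inl rfl)) ⟨x, rfl⟩
  · exact iff_of_false not_sat_Bf_spikePt_inr (fun ⟨_, h⟩ => Sum.inr_ne_inl h)

lemma sat_Bf_iff_of_R_succ {i : Fin n} {y z : SpikeW Fs}
    (h : (prodFrame (spikeFactors Fs)).R i.succ y z) :
    Sat (prodFrame (spikeFactors Fs)) (spikeVal m v) y (Bf m) ↔
      Sat (prodFrame (spikeFactors Fs)) (spikeVal m v) z (Bf m) := by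
  rw [sat_Bf_iff, sat_Bf_iff, (prodFrame_R_succ_iff.1 h).1]

variable (Fs) in
def embed (w : ∀ i, (Fs i).W) : SpikeW Fs := spikePt (.inl (w 0)) (Fin.tail w)

lemma R_embed_iff (i : Fin (n+1)) (w w' : ∀ i, (Fs i).W) :
    (prodFrame (spikeFactors Fs)).R i (embed Fs w) (embed Fs w') ↔ (prodFrame Fs).R i w w' := by
  cases i using Fin.cases with
  | zero => exact prodFrame_R_zero_iff.trans (prodFrame_R_zero_iff (x := w) (y := w')).symm
  | succ i =>
    exact prodFrame_R_succ_iff.trans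
      ((and_congr Sum.inl_injective.eq_iff Iff.rfl).trans
        (prodFrame_R_succ_iff (x := w) (y := w')).symm)

lemma sat_Bf_iff_exists_eq_embed (y : SpikeW Fs) :
    Sat (prodFrame (spikeFactors Fs)) (spikeVal m v) y (Bf m) ↔ ∃ w, y = embed Fs w := by
  rw [sat_Bf_iff]
  constructor
  · rintro ⟨x, hx⟩
    refine ⟨Fin.cons x (Fin.tail y), ?_⟩
    rw [← spikePt_head_tail y, hx]
    rfl
  · rintro ⟨w, rfl⟩
    exact ⟨w 0, rfl⟩

lemma sat_betaF_embed_iff (w : ∀ i, (Fs i).W) (k : ℕ) :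
    Sat (prodFrame (spikeFactors Fs)) (spikeVal m v) (embed Fs w) (betaF k) ↔ Enabled m v w k := by
  rw [embed, sat_betaF_spikePt_inl_iff, Fin.cons_self_tail]

lemma enabled_iff_of_le {w : ∀ i, (Fs i).W} {k : ℕ} (hk : k ≤ m) : Enabled m v w k ↔ w ∈ v k := by
  simp only [Enabled, hk, true_and, or_iff_right_iff_imp]
  omega

end SpikeProduct

lemma validSet_logicT_iff {F : Frame 1} : ValidSet F logicT ↔ ReflexiveFrame F := by
  refine ⟨fun h x => ?_, fun h φ hφ => hφ F h⟩
  have hT : (.imp (.box 0 (.var 0)) (.var 0) : MF 1) ∈ logicT := fun G hG v y hy => hy y (hG y)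
  exact h _ hT (fun _ => {y | F.R 0 x y}) x (fun y hy => hy)

lemma validSet_spikeFactors {n : ℕ} {Fs : Fin (n+1) → Frame 1} {Ls : Fin n → Set (MF 1)}
    (h0 : ReflexiveFrame (Fs 0)) (hFs : ∀ i : Fin n, ValidSet (Fs i.succ) (Ls i)) (i : Fin (n+1)) :
    ValidSet (spikeFactors Fs i) (Fin.cases (motive := fun _ => Set (MF 1)) logicT Ls i) := by
  cases i using Fin.cases with
  | zero => exact validSet_logicT_iff.2 h0.spikeFrame
  | succ i => exact hFs i

end ModalProducts

open ModalProducts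

theorem products_with_T_lemma_3_1_left_general (n m : ℕ) (Ls : Fin n → Set (MF 1))
    (L : Set (MF (n+1)))
    (hL : L = productLogic (Fin.cases (motive := fun _ => Set (MF 1)) logicT Ls))
    (φ : MF (n+1)) (hvars : ∀ q ∈ φ.vars, 1 ≤ q ∧ q ≤ m)
    (hφ : φ ∉ L) :
    MF.imp (Af m φ) (sigmaT m φ) ∉ L := by
  subst hL
  intro hσ
  obtain ⟨_, ⟨Fs, hFs, rfl⟩, hφ⟩ := not_forall₂.1 hφ
  obtain ⟨v, w, hw⟩ : ∃ v w, ¬ Sat (prodFrame Fs) v w φ := by simpa [Valid] using hφ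
  have hfactors :=
    validSet_spikeFactors (Ls := Ls) (validSet_logicT_iff.1 (hFs 0)) (fun i => hFs i.succ)
  have hβ (k) (hk : k ≤ m) (w : ∀ i, (Fs i).W) :=
    (sat_betaF_embed_iff (v := v) w k).trans (enabled_iff_of_le hk)
  have hA : Sat _ (spikeVal m v) (embed Fs w) (Af m φ) :=
    sat_Af_of_sat_Bf φ (fun _ _ _ => sat_Bf_iff_of_R_succ)
      ((sat_betaF_embed_iff w (m + 1)).2 (.inl rfl))
  refine hw ((sat_sigmaT_iff (embed Fs) R_embed_iff sat_Bf_iff_exists_eq_embed hβ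
    (fun q hq => (hvars q hq).2) w).1 ?_)
  exact hσ _ ⟨spikeFactors Fs, hfactors, rfl⟩ (spikeVal m v) (embed Fs w) hA

/-- **Lemma 3.1, direction (⇐), contrapositive.** Let `n ≥ 1`, let `L₂, …, Lₙ` be
Kripke complete monomodal logics and `L = T × L₂ × … × Lₙ`.  For an `(n+1)`-modal
formula `φ` whose variables are among `p₁, …, p_m`, with `A` and `σ` defined from `φ`:
if `φ ∉ L` then `A → σ(φ) ∉ L`. -/
theorem products_with_T_lemma_3_1_left (n m : ℕ) (Ls : Fin n → Set (MF 1))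
    (hLs : ∀ i, KripkeComplete (Ls i))
    (L : Set (MF (n+1)))
    (hL : L = productLogic (Fin.cases (motive := fun _ => Set (MF 1)) logicT Ls))
    (φ : MF (n+1)) (hvars : ∀ q ∈ φ.vars, 1 ≤ q ∧ q ≤ m)
    (hφ : φ ∉ L) :
    MF.imp (Af m φ) (sigmaT m φ) ∉ L :=
  products_with_T_lemma_3_1_left_general n m Ls L hL φ hvars hφ
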